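/- Let 0 < α < 1 and ρ > 0, and set λ₀ = ρ/√(1−α). Then ψ_R″ and ψ_R‴ do not depend on R, ψ_R″ is an even function on ℝ whose zero set is exactly {−λ₀, λ₀}, and ψ_R‴(λ) = α(2−α)·λ·[(1−α)λ² − 3ρ²]·(λ² + ρ²)^{α/2 − 3} is an odd function on ℝ whose zero set is exactly {0, −√3·λ₀, √3·λ₀}. Moreover, there is a constant C > 0 depending only on α and ρ with |ψ_R″(λ)| ≤ C·(|λ|+1)^{−(2−α)} for all λ ∈ ℝ, and for every ε > 0 there is a constant c > 0, depending only on α, ρ and ε, such that |ψ_R″(λ)| ≥ c·(|λ|+1)^{−(2−α)} whenever ||λ| − λ₀| ≥ ε. -/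

import Mathlib

/-!
Differentiating twice, `ψ_R″(λ) = α((α−1)λ² + ρ²)(λ² + ρ²)^{α/2−2}`, in which `R` no longer
appears; since `(1−α)λ₀² = ρ²`, the middle factor is `(1−α)(λ₀² − λ²)`, which locates the zeros.
For the bounds, `λ² + ρ²` is comparable to `(|λ| + 1)²`, so `(λ² + ρ²)^{α/2−1}` is comparable to
the weight `(|λ| + 1)^{−(2−α)}`; it remains to compare `|(α−1)λ² + ρ²|` with `λ² + ρ²`, from above
always and from below as soon as `||λ| − λ₀| ≥ ε`.
-/

open Real

/-- The phase `ψ_R(λ) = (λ² + ρ²)^{α/2} − R·λ`. -/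
noncomputable def psi (α ρ R lam : ℝ) : ℝ :=
  (lam ^ 2 + ρ ^ 2) ^ (α / 2) - R * lam

section Derivatives

variable {ρ : ℝ}

lemma hasDerivAt_sq_add_sq_rpow (hρ : ρ ≠ 0) (p x : ℝ) :
    HasDerivAt (fun y : ℝ => (y ^ 2 + ρ ^ 2) ^ p) (2 * x * p * (x ^ 2 + ρ ^ 2) ^ (p - 1)) x := by
  have hbase : HasDerivAt (fun y : ℝ => y ^ 2 + ρ ^ 2) (2 * x) x := by
    simpa using (hasDerivAt_pow 2 x).add_const (ρ ^ 2)
  exact hbase.rpow_const (Or.inl (by positivity))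

lemma hasDerivAt_psi (hρ : ρ ≠ 0) (α R x : ℝ) :
    HasDerivAt (psi α ρ R) (α * x * (x ^ 2 + ρ ^ 2) ^ (α / 2 - 1) - R) x := by
  refine ((hasDerivAt_sq_add_sq_rpow hρ (α / 2) x).sub
    ((hasDerivAt_id x).const_mul R)).congr_deriv ?_
  simp only [mul_one]
  ring

lemma hasDerivAt_deriv_psi (hρ : ρ ≠ 0) (α R x : ℝ) :
    HasDerivAt (fun y => α * y * (y ^ 2 + ρ ^ 2) ^ (α / 2 - 1) - R)
      (α * ((α - 1) * x ^ 2 + ρ ^ 2) * (x ^ 2 + ρ ^ 2) ^ (α / 2 - 2)) x := by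
  refine (((hasDerivAt_id x).const_mul α).mul
    (hasDerivAt_sq_add_sq_rpow hρ (α / 2 - 1) x)).sub_const R |>.congr_deriv ?_
  rw [show α / 2 - 1 - 1 = α / 2 - 2 by ring, show α / 2 - 1 = α / 2 - 2 + 1 by ring,
    rpow_add_one (by positivity)]
  simp only [id_eq, mul_one]
  ring

lemma hasDerivAt_iteratedDeriv_two_psi (hρ : ρ ≠ 0) (α x : ℝ) :
    HasDerivAt (fun y => α * ((α - 1) * y ^ 2 + ρ ^ 2) * (y ^ 2 + ρ ^ 2) ^ (α / 2 - 2))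
      (α * (2 - α) * x * ((1 - α) * x ^ 2 - 3 * ρ ^ 2) * (x ^ 2 + ρ ^ 2) ^ (α / 2 - 3)) x := by
  have hpoly : HasDerivAt (fun y : ℝ => α * ((α - 1) * y ^ 2 + ρ ^ 2))
      (α * ((α - 1) * (2 * x))) x := by
    simpa using (((hasDerivAt_pow 2 x).const_mul (α - 1)).add_const (ρ ^ 2)).const_mul α
  refine (hpoly.mul (hasDerivAt_sq_add_sq_rpow hρ (α / 2 - 2) x)).congr_deriv ?_
  rw [show α / 2 - 2 - 1 = α / 2 - 3 by ring, show α / 2 - 2 = α / 2 - 3 + 1 by ring,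
    rpow_add_one (by positivity)]
  ring

theorem iteratedDeriv_two_psi (hρ : ρ ≠ 0) (α R : ℝ) :
    iteratedDeriv 2 (psi α ρ R)
      = fun x => α * ((α - 1) * x ^ 2 + ρ ^ 2) * (x ^ 2 + ρ ^ 2) ^ (α / 2 - 2) := by
  rw [iteratedDeriv_succ, iteratedDeriv_one,
    funext fun x => (hasDerivAt_psi hρ α R x).deriv]
  exact funext fun x => (hasDerivAt_deriv_psi hρ α R x).deriv

theorem iteratedDeriv_three_psi (hρ : ρ ≠ 0) (α R : ℝ) :
    iteratedDeriv 3 (psi α ρ R)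
      = fun x => α * (2 - α) * x * ((1 - α) * x ^ 2 - 3 * ρ ^ 2)
          * (x ^ 2 + ρ ^ 2) ^ (α / 2 - 3) := by
  rw [iteratedDeriv_succ, iteratedDeriv_two_psi hρ]
  exact funext fun x => (hasDerivAt_iteratedDeriv_two_psi hρ α x).deriv

end Derivatives

section CriticalPoint

variable {α ρ lam0 : ℝ}

theorem iteratedDeriv_two_psi_apply_eq (hρ : ρ ≠ 0) (hlam0 : (1 - α) * lam0 ^ 2 = ρ ^ 2)
    (R x : ℝ) :
    iteratedDeriv 2 (psi α ρ R) x
      = α * (1 - α) * (lam0 ^ 2 - x ^ 2) * (x ^ 2 + ρ ^ 2) ^ (α / 2 - 2) := by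
  rw [iteratedDeriv_two_psi hρ]
  linear_combination -α * (x ^ 2 + ρ ^ 2) ^ (α / 2 - 2) * hlam0

theorem iteratedDeriv_three_psi_apply_eq (hρ : ρ ≠ 0) (hlam0 : (1 - α) * lam0 ^ 2 = ρ ^ 2)
    (R x : ℝ) :
    iteratedDeriv 3 (psi α ρ R) x
      = α * (2 - α) * (1 - α) * x * (x ^ 2 - (√3 * lam0) ^ 2) * (x ^ 2 + ρ ^ 2) ^ (α / 2 - 3) := by
  rw [iteratedDeriv_three_psi hρ]
  rw [mul_pow, sq_sqrt zero_le_three]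
  linear_combination 3 * α * (2 - α) * x * (x ^ 2 + ρ ^ 2) ^ (α / 2 - 3) * hlam0

theorem iteratedDeriv_two_psi_eq_zero_iff (hα0 : α ≠ 0) (hα1 : α ≠ 1) (hρ : ρ ≠ 0)
    (hlam0 : (1 - α) * lam0 ^ 2 = ρ ^ 2) (R x : ℝ) :
    iteratedDeriv 2 (psi α ρ R) x = 0 ↔ x = lam0 ∨ x = -lam0 := by
  have hq : (x ^ 2 + ρ ^ 2) ^ (α / 2 - 2) ≠ 0 := by positivity
  have h1α : 1 - α ≠ 0 := sub_ne_zero.mpr (Ne.symm hα1)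
  rw [iteratedDeriv_two_psi_apply_eq hρ hlam0, mul_eq_zero_iff_right hq,
    mul_eq_zero_iff_left (mul_ne_zero hα0 h1α), sub_eq_zero, eq_comm, sq_eq_sq_iff_eq_or_eq_neg]

theorem iteratedDeriv_three_psi_eq_zero_iff (hα0 : α ≠ 0) (hα1 : α ≠ 1) (hα2 : α ≠ 2)
    (hρ : ρ ≠ 0) (hlam0 : (1 - α) * lam0 ^ 2 = ρ ^ 2) (R x : ℝ) :
    iteratedDeriv 3 (psi α ρ R) x = 0 ↔ x = 0 ∨ x = √3 * lam0 ∨ x = -(√3 * lam0) := by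
  have hq : (x ^ 2 + ρ ^ 2) ^ (α / 2 - 3) ≠ 0 := by positivity
  have hc : α * (2 - α) * (1 - α) ≠ 0 :=
    mul_ne_zero (mul_ne_zero hα0 (sub_ne_zero.mpr (Ne.symm hα2))) (sub_ne_zero.mpr (Ne.symm hα1))
  rw [iteratedDeriv_three_psi_apply_eq hρ hlam0, mul_eq_zero_iff_right hq, mul_assoc,
    mul_eq_zero_iff_left hc, mul_eq_zero, sub_eq_zero, sq_eq_sq_iff_eq_or_eq_neg]

end CriticalPoint

lemma sq_add_sq_le_max_mul_abs_add_one_sq (ρ x : ℝ) :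
    x ^ 2 + ρ ^ 2 ≤ max 1 (ρ ^ 2) * (|x| + 1) ^ 2 := by
  have h1 := le_max_left 1 (ρ ^ 2)
  have h2 := le_max_right 1 (ρ ^ 2)
  nlinarith [sq_abs x, abs_nonneg x, mul_nonneg (sub_nonneg.mpr h1) (sq_nonneg x),
    mul_nonneg (zero_le_one.trans h1) (abs_nonneg x)]

lemma min_mul_abs_add_one_sq_le_sq_add_sq (ρ x : ℝ) :
    min 1 (ρ ^ 2) / 2 * (|x| + 1) ^ 2 ≤ x ^ 2 + ρ ^ 2 := by
  have h1 := min_le_left 1 (ρ ^ 2)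
  have h2 := min_le_right 1 (ρ ^ 2)
  have h0 : 0 ≤ min 1 (ρ ^ 2) := le_min zero_le_one (sq_nonneg ρ)
  nlinarith [sq_abs x, mul_nonneg h0 (sq_nonneg (|x| - 1)),
    mul_le_mul_of_nonneg_right h1 (sq_nonneg x)]

section Bounds

variable {α ρ : ℝ}

lemma mul_abs_add_one_sq_rpow {c : ℝ} (hc : 0 ≤ c) (p x : ℝ) :
    (c * (|x| + 1) ^ 2) ^ p = c ^ p * (|x| + 1) ^ (2 * p) := by
  rw [mul_rpow hc (by positivity), ← rpow_natCast_mul (by positivity)]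
  norm_num

lemma sq_add_sq_rpow_le (hρ : ρ ≠ 0) {p : ℝ} (hp : p ≤ 0) (x : ℝ) :
    (x ^ 2 + ρ ^ 2) ^ p ≤ (min 1 (ρ ^ 2) / 2) ^ p * (|x| + 1) ^ (2 * p) := by
  have hm : 0 < min 1 (ρ ^ 2) / 2 := by positivity
  rw [← mul_abs_add_one_sq_rpow hm.le]
  exact rpow_le_rpow_of_nonpos (by positivity) (min_mul_abs_add_one_sq_le_sq_add_sq ρ x) hp

lemma le_sq_add_sq_rpow (hρ : ρ ≠ 0) {p : ℝ} (hp : p ≤ 0) (x : ℝ) :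
    max 1 (ρ ^ 2) ^ p * (|x| + 1) ^ (2 * p) ≤ (x ^ 2 + ρ ^ 2) ^ p := by
  rw [← mul_abs_add_one_sq_rpow (zero_le_one.trans (le_max_left _ _))]
  exact rpow_le_rpow_of_nonpos (by positivity) (sq_add_sq_le_max_mul_abs_add_one_sq ρ x) hp

lemma abs_iteratedDeriv_two_psi_le (hα0 : 0 ≤ α) (hα2 : α ≤ 2) (hρ : ρ ≠ 0) (R x : ℝ) :
    |iteratedDeriv 2 (psi α ρ R) x| ≤ α * (x ^ 2 + ρ ^ 2) ^ (α / 2 - 1) := by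
  have hq : 0 < x ^ 2 + ρ ^ 2 := by positivity
  have hnum : |(α - 1) * x ^ 2 + ρ ^ 2| ≤ x ^ 2 + ρ ^ 2 :=
    abs_le.mpr ⟨by nlinarith [sq_nonneg x, sq_nonneg ρ], by nlinarith [sq_nonneg x]⟩
  rw [iteratedDeriv_two_psi hρ, show α / 2 - 1 = α / 2 - 2 + 1 by ring, rpow_add_one hq.ne',
    abs_mul, abs_mul, abs_of_nonneg hα0, abs_of_pos (rpow_pos_of_pos hq _)]
  calc α * |(α - 1) * x ^ 2 + ρ ^ 2| * (x ^ 2 + ρ ^ 2) ^ (α / 2 - 2)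
      ≤ α * (x ^ 2 + ρ ^ 2) * (x ^ 2 + ρ ^ 2) ^ (α / 2 - 2) := by gcongr
    _ = _ := by ring

/-- Away from `±a`, `a² − x²` is comparable to `x² + a²`: for `|x| ≥ 2a` both are of size `x²`,
and for `|x| ≤ 2a` the first factor of `(a − |x|)(a + |x|)` is at least `ε`. -/
lemma min_mul_sq_add_sq_le_abs_sq_sub_sq {a ε x : ℝ} (ha : 0 < a) (hε : 0 ≤ ε)
    (hx : ε ≤ |(|x| - a)|) : min 1 (ε / a) * (x ^ 2 + a ^ 2) ≤ 5 * |a ^ 2 - x ^ 2| := by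
  have hfac : |a ^ 2 - x ^ 2| = |(|x| - a)| * (|x| + a) := by
    rw [← sq_abs x, show a ^ 2 - |x| ^ 2 = -((|x| - a) * (|x| + a)) by ring, abs_neg, abs_mul,
      abs_of_nonneg (by positivity : 0 ≤ |x| + a)]
  rw [hfac]
  rcases le_total (|x|) (2 * a) with hsmall | hlarge
  · calc min 1 (ε / a) * (x ^ 2 + a ^ 2) ≤ ε / a * (5 * a ^ 2) := by
          gcongr
          · exact min_le_right _ _
          · nlinarith [sq_abs x, abs_nonneg x]
      _ = 5 * (ε * a) := by field_simp
      _ ≤ 5 * (|(|x| - a)| * (|x| + a)) := by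
          gcongr
          linarith [abs_nonneg x]
  · have h : |x| - a ≤ |(|x| - a)| := le_abs_self _
    calc min 1 (ε / a) * (x ^ 2 + a ^ 2) ≤ 1 * (x ^ 2 + a ^ 2) := by
          gcongr
          exact min_le_left _ _
      _ ≤ 5 * (|(|x| - a)| * (|x| + a)) := by
          nlinarith [sq_abs x, mul_le_mul_of_nonneg_right h (by positivity : 0 ≤ |x| + a)]

lemma le_abs_iteratedDeriv_two_psi {lam0 κ : ℝ} (hρ : ρ ≠ 0)
    (hlam0 : (1 - α) * lam0 ^ 2 = ρ ^ 2) {R x : ℝ} (hκ : κ * (x ^ 2 + ρ ^ 2) ≤ |lam0 ^ 2 - x ^ 2|) :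
    |α * (1 - α)| * κ * (x ^ 2 + ρ ^ 2) ^ (α / 2 - 1) ≤ |iteratedDeriv 2 (psi α ρ R) x| := by
  have hq : 0 < x ^ 2 + ρ ^ 2 := by positivity
  rw [iteratedDeriv_two_psi_apply_eq hρ hlam0, show α / 2 - 1 = α / 2 - 2 + 1 by ring,
    rpow_add_one hq.ne', abs_mul _ ((x ^ 2 + ρ ^ 2) ^ _), abs_of_pos (rpow_pos_of_pos hq _),
    abs_mul (α * (1 - α))]
  calc |α * (1 - α)| * κ * ((x ^ 2 + ρ ^ 2) ^ (α / 2 - 2) * (x ^ 2 + ρ ^ 2))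
      = |α * (1 - α)| * (κ * (x ^ 2 + ρ ^ 2)) * (x ^ 2 + ρ ^ 2) ^ (α / 2 - 2) := by ring
    _ ≤ |α * (1 - α)| * |lam0 ^ 2 - x ^ 2| * (x ^ 2 + ρ ^ 2) ^ (α / 2 - 2) := by gcongr

theorem exists_abs_iteratedDeriv_two_psi_le (hα0 : 0 < α) (hα2 : α ≤ 2) (hρ : ρ ≠ 0) :
    ∃ C : ℝ, 0 < C ∧ ∀ R x : ℝ,
      |iteratedDeriv 2 (psi α ρ R) x| ≤ C * (|x| + 1) ^ (-(2 - α)) := by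
  refine ⟨α * (min 1 (ρ ^ 2) / 2) ^ (α / 2 - 1), by positivity, fun R x => ?_⟩
  have h := sq_add_sq_rpow_le hρ (by linarith : α / 2 - 1 ≤ 0) x
  rw [show 2 * (α / 2 - 1) = -(2 - α) by ring] at h
  calc |iteratedDeriv 2 (psi α ρ R) x| ≤ α * (x ^ 2 + ρ ^ 2) ^ (α / 2 - 1) :=
        abs_iteratedDeriv_two_psi_le hα0.le hα2 hρ R x
    _ ≤ _ := by rw [mul_assoc]; gcongr

theorem exists_le_abs_iteratedDeriv_two_psi (hα0 : 0 < α) (hα1 : α < 1) (hρ : ρ ≠ 0)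
    {lam0 : ℝ} (hlam0_pos : 0 < lam0) (hlam0 : (1 - α) * lam0 ^ 2 = ρ ^ 2) {ε : ℝ} (hε : 0 < ε) :
    ∃ c : ℝ, 0 < c ∧ ∀ R x : ℝ, ε ≤ |(|x| - lam0)| →
      c * (|x| + 1) ^ (-(2 - α)) ≤ |iteratedDeriv 2 (psi α ρ R) x| := by
  set κ := min 1 (ε / lam0) / 5 with hκ_def
  have hκ : 0 < κ := by positivity
  have hc : 0 < α * (1 - α) := mul_pos hα0 (sub_pos.mpr hα1)
  have hρ_le : ρ ^ 2 ≤ lam0 ^ 2 := by nlinarith [sq_nonneg lam0]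
  refine ⟨α * (1 - α) * κ * max 1 (ρ ^ 2) ^ (α / 2 - 1),
    mul_pos (mul_pos hc hκ) (rpow_pos_of_pos (zero_lt_one.trans_le (le_max_left _ _)) _),
    fun R x hx => ?_⟩
  have hcomp : κ * (x ^ 2 + ρ ^ 2) ≤ |lam0 ^ 2 - x ^ 2| := by
    have := min_mul_sq_add_sq_le_abs_sq_sub_sq hlam0_pos hε.le hx
    calc κ * (x ^ 2 + ρ ^ 2) ≤ κ * (x ^ 2 + lam0 ^ 2) := by gcongr
      _ = min 1 (ε / lam0) * (x ^ 2 + lam0 ^ 2) / 5 := by rw [hκ_def]; ring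
      _ ≤ _ := by linarith
  have h := le_sq_add_sq_rpow hρ (by linarith : α / 2 - 1 ≤ 0) x
  rw [show 2 * (α / 2 - 1) = -(2 - α) by ring] at h
  calc α * (1 - α) * κ * max 1 (ρ ^ 2) ^ (α / 2 - 1) * (|x| + 1) ^ (-(2 - α))
      ≤ |α * (1 - α)| * κ * (x ^ 2 + ρ ^ 2) ^ (α / 2 - 1) := by
        rw [abs_of_pos hc, mul_assoc _ (max 1 (ρ ^ 2) ^ _)]
        gcongr
    _ ≤ _ := le_abs_iteratedDeriv_two_psi hρ hlam0 hcomp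

end Bounds

theorem stmt7 (α ρ : ℝ) (hα0 : 0 < α) (hα1 : α < 1) (hρ : 0 < ρ)
    (lam0 : ℝ) (hlam0 : lam0 = ρ / Real.sqrt (1 - α)) :
    -- ψ_R″ and ψ_R‴ do not depend on R
    (∀ R R' : ℝ, iteratedDeriv 2 (psi α ρ R) = iteratedDeriv 2 (psi α ρ R') ∧
      iteratedDeriv 3 (psi α ρ R) = iteratedDeriv 3 (psi α ρ R')) ∧
    -- ψ_R″ is even with zero set exactly {−λ₀, λ₀}
    (∀ R lam : ℝ, iteratedDeriv 2 (psi α ρ R) (-lam) = iteratedDeriv 2 (psi α ρ R) lam) ∧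
    (∀ R lam : ℝ, iteratedDeriv 2 (psi α ρ R) lam = 0 ↔ lam = lam0 ∨ lam = -lam0) ∧
    -- explicit formula for ψ_R‴
    (∀ R lam : ℝ, iteratedDeriv 3 (psi α ρ R) lam
      = α * (2 - α) * lam * ((1 - α) * lam ^ 2 - 3 * ρ ^ 2)
          * (lam ^ 2 + ρ ^ 2) ^ (α / 2 - 3)) ∧
    -- ψ_R‴ is odd with zero set exactly {0, −√3·λ₀, √3·λ₀}
    (∀ R lam : ℝ, iteratedDeriv 3 (psi α ρ R) (-lam) = - iteratedDeriv 3 (psi α ρ R) lam) ∧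
    (∀ R lam : ℝ, iteratedDeriv 3 (psi α ρ R) lam = 0 ↔
      lam = 0 ∨ lam = Real.sqrt 3 * lam0 ∨ lam = -(Real.sqrt 3 * lam0)) ∧
    -- upper bound for |ψ_R″|
    (∃ C : ℝ, 0 < C ∧ ∀ R lam : ℝ,
      |iteratedDeriv 2 (psi α ρ R) lam| ≤ C * (|lam| + 1) ^ (-(2 - α))) ∧
    -- lower bound for |ψ_R″| away from ±λ₀
    (∀ ε : ℝ, 0 < ε → ∃ c : ℝ, 0 < c ∧ ∀ R lam : ℝ, ε ≤ |(|lam| - lam0)| →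
      c * (|lam| + 1) ^ (-(2 - α)) ≤ |iteratedDeriv 2 (psi α ρ R) lam|) := by
  have h1α : 0 < 1 - α := sub_pos.mpr hα1
  have hlam0_pos : 0 < lam0 := by rw [hlam0]; positivity
  have hlam0_sq : (1 - α) * lam0 ^ 2 = ρ ^ 2 := by
    rw [hlam0, div_pow, sq_sqrt h1α.le]
    field_simp
  have h2 := iteratedDeriv_two_psi hρ.ne' α
  have h3 := iteratedDeriv_three_psi hρ.ne' α
  refine ⟨fun R R' => ⟨by rw [h2, h2], by rw [h3, h3]⟩, fun R x => by simp only [h2, neg_sq],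
    iteratedDeriv_two_psi_eq_zero_iff hα0.ne' hα1.ne hρ.ne' hlam0_sq, fun R x => by rw [h3],
    fun R x => by simp only [h3, neg_sq]; ring,
    iteratedDeriv_three_psi_eq_zero_iff hα0.ne' hα1.ne (by linarith) hρ.ne' hlam0_sq,
    exists_abs_iteratedDeriv_two_psi_le hα0 (by linarith) hρ.ne',
    fun ε hε => exists_le_abs_iteratedDeriv_two_psi hα0 hα1 hρ.ne' hlam0_pos hlam0_sq hε⟩
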